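/- arXiv:2310.03316 — 4 statements merged into one kernel-verified Lean document; each statement's English description precedes it below -/
import Mathlib

section
/- For every complex number t with |t| ≤ 1, the rational map f_t(w) = w + t/(2w²) is injective on the region {w ∈ ℂ : |w| > 1}. -/
/-! If `f_t(a) = f_t(b)` with `a ≠ b`, then `a - b = t (a² - b²) / (2 a² b²)`, so
`2 a² b² = t (a + b)`. Taking norms gives `2 |a|² |b|² ≤ |t| (|a| + |b|) ≤ |a| + |b|`,
which is impossible once `|a|, |b| > 1`. -/

lemma two_mul_sq_mul_sq_eq_of_add_div_sq_eq {K : Type*} [Field K] [NeZero (2 : K)] {t a b : K}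
    (ha : a ≠ 0) (hb : b ≠ 0) (hab : a ≠ b)
    (h : a + t / (2 * a ^ 2) = b + t / (2 * b ^ 2)) :
    2 * a ^ 2 * b ^ 2 = t * (a + b) := by
  have hcleared : (a - b) * (2 * a ^ 2 * b ^ 2) = (a - b) * (t * (a + b)) := by
    field_simp at h
    linear_combination h
  exact mul_left_cancel₀ (sub_ne_zero.mpr hab) hcleared

lemma add_lt_two_mul_sq_mul_sq {x y : ℝ} (hx : 1 < x) (hy : 1 < y) :
    x + y < 2 * x ^ 2 * y ^ 2 := by
  have hxy : 1 < x * y := one_lt_mul_of_lt_of_le hx hy.le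
  nlinarith

/-- For every complex number `t` with `|t| ≤ 1`, the rational map
`f_t(w) = w + t / (2 w²)` is injective on the region `{w : ℂ | |w| > 1}`. -/
theorem deltoid_family_injective (t : ℂ) (ht : ‖t‖ ≤ 1) :
    Set.InjOn (fun w : ℂ => w + t / (2 * w ^ 2)) {w : ℂ | 1 < ‖w‖} := by
  intro a (ha : 1 < ‖a‖) b (hb : 1 < ‖b‖) heq
  by_contra hab
  have key := two_mul_sq_mul_sq_eq_of_add_div_sq_eq (norm_pos_iff.mp (by linarith))
    (norm_pos_iff.mp (by linarith)) hab heq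
  have hle : 2 * ‖a‖ ^ 2 * ‖b‖ ^ 2 ≤ ‖a‖ + ‖b‖ :=
    calc 2 * ‖a‖ ^ 2 * ‖b‖ ^ 2 = ‖t * (a + b)‖ := by simp [← key]
      _ = ‖t‖ * ‖a + b‖ := norm_mul t (a + b)
      _ ≤ 1 * ‖a + b‖ := by gcongr
      _ ≤ ‖a‖ + ‖b‖ := by simpa using norm_add_le a b
  exact (add_lt_two_mul_sq_mul_sq ha hb).not_ge hle
end

section
/- The cubic Chebyshev polynomial f(w) = w³ − 3w is injective on the closed disk {w ∈ ℂ : |w − 3| ≤ 2}. -/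
/-!
Put `a = w - 3`, `b = z - 3`, so `‖a‖, ‖b‖ ≤ 2`. If `w ≠ z` have the same image then
`w² + wz + z² = 3`, which in these coordinates reads `(a - b)² = -3 (a + b + 4)(a + b + 8)`.
With `s = ‖a + b‖ ≤ 4`, the triangle inequality bounds `‖a - b‖²` below by `3 (4 - s)(8 - s)`,
while the parallelogram law bounds it above by `16 - s²`. Comparing the two gives
`(4 - s)(5 - s) ≤ 0`, forcing `s = 4` and then `‖a - b‖ = 0`.
-/

lemma sq_sub_eq_of_cube_sub_three_mul_eq {w z : ℂ} (h : w ^ 3 - 3 * w = z ^ 3 - 3 * z)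
    (hne : w ≠ z) :
    ((w - 3) - (z - 3)) ^ 2 = -3 * ((w - 3) + (z - 3) + 4) * ((w - 3) + (z - 3) + 8) := by
  have hfactor : (w - z) * (w ^ 2 + w * z + z ^ 2 - 3) = 0 := by linear_combination h
  have hquad : w ^ 2 + w * z + z ^ 2 - 3 = 0 :=
    (mul_eq_zero.1 hfactor).resolve_left (sub_ne_zero.2 hne)
  linear_combination 4 * hquad

lemma eq_of_norm_le_two_of_sq_sub_eq {a b : ℂ} (ha : ‖a‖ ≤ 2) (hb : ‖b‖ ≤ 2)
    (h : (a - b) ^ 2 = -3 * (a + b + 4) * (a + b + 8)) : a = b := by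
  set s := ‖a + b‖
  have hs : s ≤ 4 := by linarith [norm_add_le a b]
  have hs₀ : 0 ≤ s := norm_nonneg _
  have hupper : ‖a - b‖ ^ 2 ≤ (4 - s) * (4 + s) := by
    have := parallelogram_law_with_norm ℝ a b
    nlinarith [norm_nonneg a, norm_nonneg b]
  have hlower : 3 * (4 - s) * (8 - s) ≤ ‖a - b‖ ^ 2 := by
    have h4 : 4 - s ≤ ‖a + b + 4‖ := by
      simpa [add_comm] using norm_sub_le_norm_add (4 : ℂ) (a + b)
    have h8 : 8 - s ≤ ‖a + b + 8‖ := by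
      simpa [add_comm] using norm_sub_le_norm_add (8 : ℂ) (a + b)
    have hnorm : ‖a - b‖ ^ 2 = 3 * ‖a + b + 4‖ * ‖a + b + 8‖ := by
      simpa [norm_mul, norm_pow] using congrArg norm h
    rw [hnorm, mul_assoc, mul_assoc]
    gcongr
    linarith
  have hcompare : 4 * ((4 - s) * (5 - s)) ≤ 0 := by linarith
  have hs4 : s = 4 := by nlinarith
  have hzero : ‖a - b‖ ^ 2 = 0 := by
    rw [hs4] at hupper
    exact le_antisymm (by linarith) (sq_nonneg _)
  simpa [sub_eq_zero] using hzero

/-- The cubic Chebyshev polynomial `f(w) = w³ − 3w` is injective on the closed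
disk `{w : |w − 3| ≤ 2}`. -/
theorem chebyshev_injective_on_disk :
    Set.InjOn (fun w : ℂ => w ^ 3 - 3 * w) (Metric.closedBall (3 : ℂ) 2) := by
  intro w hw z hz h
  by_contra hne
  rw [Metric.mem_closedBall, Complex.dist_eq] at hw hz
  exact hne (sub_left_inj.1 (eq_of_norm_le_two_of_sq_sub_eq hw hz
    (sq_sub_eq_of_cube_sub_three_mul_eq h hne)))
end

section
/- There is at most one continuous function F : [0,1] → ℝ with F(0) = 0 and F(1) = 1 satisfying the mediant recursion F((p+r)/(q+s)) = (F(p/q) + F(r/s))/2 for every pair of Farey neighbors p/q, r/s in [0,1]. That is, if F and G are two continuous functions on [0,1] with these properties, then F = G. -/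
/-- Stern–Brocot / Farey pair tree inside [0,1]. -/
inductive FareyPair : ℕ → ℕ → ℕ → ℕ → Prop where
  | base : FareyPair 0 1 1 1
  | left {p q r s : ℕ} : FareyPair p q r s → FareyPair p q (p + r) (q + s)
  | right {p q r s : ℕ} : FareyPair p q r s → FareyPair (p + r) (q + s) r s

lemma FareyPair.inv {p q r s : ℕ} (h : FareyPair p q r s) :
    0 < q ∧ 0 < s ∧ p ≤ q ∧ r ≤ s ∧ (q : ℤ) * r - p * s = 1 := by
  induction h with
  | base => norm_num
  | left h ih =>
    obtain ⟨hq, hs, hpq, hrs, hd⟩ := ih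
    refine ⟨hq, by omega, hpq, by omega, ?_⟩
    push_cast; push_cast at hd; ring_nf; ring_nf at hd; linarith
  | right h ih =>
    obtain ⟨hq, hs, hpq, hrs, hd⟩ := ih
    refine ⟨by omega, hs, by omega, hrs, ?_⟩
    push_cast; push_cast at hd; ring_nf; ring_nf at hd; linarith

/-- Uniqueness of the Minkowski question mark function: there is at most one continuous
`F : [0,1] → ℝ` with `F(0) = 0`, `F(1) = 1`, satisfying the mediant recursion
`F((p+r)/(q+s)) = (F(p/q) + F(r/s))/2` for every pair of Farey neighbors `p/q, r/s` in
`[0,1]` (i.e. `|ps − qr| = 1`). -/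
theorem question_mark_unique (F G : ℝ → ℝ)
    (hFc : ContinuousOn F (Set.Icc 0 1)) (hGc : ContinuousOn G (Set.Icc 0 1))
    (hF0 : F 0 = 0) (hF1 : F 1 = 1) (hG0 : G 0 = 0) (hG1 : G 1 = 1)
    (hF : ∀ p q r s : ℕ, 0 < q → 0 < s → p ≤ q → r ≤ s →
      ((p : ℤ) * s - q * r = 1 ∨ (q : ℤ) * r - p * s = 1) →
      F (((p : ℝ) + r) / ((q : ℝ) + s)) = (F ((p : ℝ) / q) + F ((r : ℝ) / s)) / 2)
    (hG : ∀ p q r s : ℕ, 0 < q → 0 < s → p ≤ q → r ≤ s →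
      ((p : ℤ) * s - q * r = 1 ∨ (q : ℤ) * r - p * s = 1) →
      G (((p : ℝ) + r) / ((q : ℝ) + s)) = (G ((p : ℝ) / q) + G ((r : ℝ) / s)) / 2) :
    Set.EqOn F G (Set.Icc 0 1) := by
  -- F and G agree at all tree points
  have key : ∀ p q r s : ℕ, FareyPair p q r s →
      F ((p : ℝ) / q) = G ((p : ℝ) / q) ∧ F ((r : ℝ) / s) = G ((r : ℝ) / s) := by
    intro p q r s h
    induction h with
    | base =>
      norm_num [hF0, hF1, hG0, hG1]
    | @left p q r s h ih =>
      obtain ⟨hq, hs, hpq, hrs, hd⟩ := h.inv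
      have hFm := hF p q r s hq hs hpq hrs (Or.inr hd)
      have hGm := hG p q r s hq hs hpq hrs (Or.inr hd)
      refine ⟨ih.1, ?_⟩
      push_cast
      rw [hFm, hGm, ih.1, ih.2]
    | @right p q r s h ih =>
      obtain ⟨hq, hs, hpq, hrs, hd⟩ := h.inv
      have hFm := hF p q r s hq hs hpq hrs (Or.inr hd)
      have hGm := hG p q r s hq hs hpq hrs (Or.inr hd)
      refine ⟨?_, ih.2⟩
      push_cast
      rw [hFm, hGm, ih.1, ih.2]
  -- approximation: intervals of the tree shrink
  have approx : ∀ n : ℕ, ∀ x : ℝ, x ∈ Set.Icc (0:ℝ) 1 →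
      ∃ p q r s : ℕ, FareyPair p q r s ∧ (p : ℝ) / q ≤ x ∧ x ≤ (r : ℝ) / s ∧ n ≤ q + s := by
    intro n
    induction n with
    | zero =>
      intro x hx
      exact ⟨0, 1, 1, 1, FareyPair.base, by simpa using hx.1, by simpa using hx.2, by omega⟩
    | succ n ih =>
      intro x hx
      obtain ⟨p, q, r, s, hfp, hl, hr, hn⟩ := ih x hx
      obtain ⟨hq, hs, -, -, -⟩ := hfp.inv
      rcases le_total x (((p : ℝ) + r) / ((q : ℝ) + s)) with hx' | hx'
      · refine ⟨p, q, p + r, q + s, hfp.left, hl, ?_, by omega⟩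
        push_cast; exact hx'
      · refine ⟨p + r, q + s, r, s, hfp.right, ?_, hr, by omega⟩
        push_cast; exact hx'
  -- the set of tree points
  set S : Set ℝ := {x | ∃ p q r s : ℕ, FareyPair p q r s ∧ ((x = (p:ℝ)/q) ∨ (x = (r:ℝ)/s))}
    with hS
  have hSsub : S ⊆ Set.Icc (0:ℝ) 1 := by
    rintro x ⟨p, q, r, s, hfp, hx⟩
    obtain ⟨hq, hs, hpq, hrs, -⟩ := hfp.inv
    rcases hx with rfl | rfl
    · constructor
      · positivity
      · rw [div_le_one (by positivity)]; exact_mod_cast hpq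
    · constructor
      · positivity
      · rw [div_le_one (by positivity)]; exact_mod_cast hrs
  have hSeq : ∀ x ∈ S, F x = G x := by
    rintro x ⟨p, q, r, s, hfp, hx⟩
    rcases hx with rfl | rfl
    · exact (key p q r s hfp).1
    · exact (key p q r s hfp).2
  -- density: Icc 0 1 ⊆ closure S
  have hdense : Set.Icc (0:ℝ) 1 ⊆ closure S := by
    intro x hx
    rw [Metric.mem_closure_iff]
    intro ε hε
    obtain ⟨n, hn⟩ := exists_nat_gt (1 / ε)
    obtain ⟨p, q, r, s, hfp, hl, hr, hqs⟩ := approx (n + 1) x hx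
    obtain ⟨hq, hs, hpq, hrs, hd⟩ := hfp.inv
    refine ⟨(p : ℝ) / q, ⟨p, q, r, s, hfp, Or.inl rfl⟩, ?_⟩
    have hq' : (0:ℝ) < q := by exact_mod_cast hq
    have hs' : (0:ℝ) < s := by exact_mod_cast hs
    have hlen : (r : ℝ) / s - (p : ℝ) / q = 1 / (q * s) := by
      rw [div_sub_div _ _ (ne_of_gt hs') (ne_of_gt hq')]
      have : (r : ℝ) * q - (s : ℝ) * p = 1 := by
        have := hd
        have h2 : (q : ℝ) * r - p * s = 1 := by exact_mod_cast this
        linarith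
      rw [this]
      ring
    have hqsge : (n : ℝ) ≤ (q : ℝ) * s := by
      have : n ≤ q * s := by nlinarith [hqs, hq, hs]
      exact_mod_cast this
    have hnpos : (0:ℝ) < n := by
      have : (0:ℝ) < 1 / ε := by positivity
      linarith
    have hεn : 1 / (n : ℝ) < ε := by
      rw [div_lt_iff₀ hnpos]
      rw [div_lt_iff₀ hε] at hn
      linarith
    have hdist : dist x ((p:ℝ)/q) < ε := by
      rw [Real.dist_eq, abs_of_nonneg (by linarith)]
      have h1 : x - (p:ℝ)/q ≤ 1 / ((q:ℝ) * s) := by linarith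
      have h2 : 1 / ((q:ℝ)*s) ≤ 1 / (n:ℝ) := by
        apply one_div_le_one_div_of_le hnpos hqsge
      linarith
    exact hdist
  -- conclude by continuity
  have hC : IsClosed (Set.Icc (0:ℝ) 1 ∩ (fun x => F x - G x) ⁻¹' {0}) := by
    exact (hFc.sub hGc).preimage_isClosed_of_isClosed isClosed_Icc isClosed_singleton
  intro x hx
  have hSC : S ⊆ Set.Icc (0:ℝ) 1 ∩ (fun x => F x - G x) ⁻¹' {0} := by
    intro y hy
    exact ⟨hSsub hy, by simp [hSeq y hy]⟩
  have : x ∈ Set.Icc (0:ℝ) 1 ∩ (fun x => F x - G x) ⁻¹' {0} :=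
    hC.closure_subset ((closure_mono hSC) (hdense hx))
  have := this.2
  simp only [Set.mem_preimage, Set.mem_singleton_iff] at this
  linarith
end

section
/- Let f be a rational map whose restriction to the closed unit disk 𝔻̄ is injective and which has no poles on the unit circle S¹. Set Ω = f(𝔻) and define σ : f(𝔻̄) → ℂ̂ by σ = f ∘ η ∘ (f|_{𝔻̄})⁻¹, where η(z) = 1/z̄. Then σ is continuous on f(𝔻̄), σ(ζ) = ζ for every ζ ∈ f(S¹) = ∂Ω, and σ is anti-meromorphic on Ω. In particular, Ω is a quadrature domain with Schwarz reflection map σ. -/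
open OnePoint Polynomial

/-- Evaluation of the rational map `P/Q` (with `P, Q` coprime, `Q ≠ 0`) on the Riemann
sphere `ℂ̂ = OnePoint ℂ`, with the standard values at poles and at `∞`. -/
noncomputable def ratSphereEval (P Q : Polynomial ℂ) : OnePoint ℂ → OnePoint ℂ := fun z =>
  Option.rec (motive := fun _ => OnePoint ℂ)
    (if Q.degree < P.degree then (∞ : OnePoint ℂ)
     else if P.degree < Q.degree then ((0 : ℂ) : OnePoint ℂ)
     else ((P.leadingCoeff / Q.leadingCoeff : ℂ) : OnePoint ℂ))
    (fun w => if Q.eval w = 0 then (∞ : OnePoint ℂ)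
      else ((P.eval w / Q.eval w : ℂ) : OnePoint ℂ)) z

/-- Reflection `η(z) = 1/z̄` in the unit circle, as a map of the Riemann sphere
(`η(0) = ∞`, `η(∞) = 0`). -/
noncomputable def sphereUnitReflection : OnePoint ℂ → OnePoint ℂ := fun z =>
  Option.rec (motive := fun _ => OnePoint ℂ) (((0 : ℂ) : OnePoint ℂ))
    (fun w => if w = 0 then (∞ : OnePoint ℂ)
      else ((((starRingEnd ℂ) w)⁻¹ : ℂ) : OnePoint ℂ)) z

/-!
`f = P/Q` is continuous on the Riemann sphere and injective on the compact disk `𝔻̄`, so its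
inverse on `f(𝔻̄)` is continuous, and so is `σ = f ∘ η ∘ f⁻¹`; as `η` fixes `S¹`, `σ` fixes
`f(S¹)`. On `Ω` the inverse `h` of the injective holomorphic map `f` is holomorphic, and
`conj ∘ σ = P̄(1/h) / Q̄(1/h)`, with `P̄, Q̄` the polynomials with conjugated coefficients, is
meromorphic.
-/

open Filter Topology Set Metric Bornology

lemma tendsto_coe_div_infty {α : Type*} {l : Filter α} {p q : α → ℂ}
    (h : Tendsto (fun x => q x / p x) l (𝓝 0)) (hp : ∀ᶠ x in l, p x ≠ 0)
    (hq : ∀ᶠ x in l, q x ≠ 0) : Tendsto (fun x => ((p x / q x : ℂ) : OnePoint ℂ)) l (𝓝 ∞) := by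
  have hinv : Tendsto (fun x => (p x / q x)⁻¹) l (𝓝[≠] 0) := by
    simp only [inv_div]
    exact tendsto_nhdsWithin_iff.2 ⟨h, (hp.and hq).mono fun x hx => div_ne_zero hx.2 hx.1⟩
  have hf : Tendsto (fun x => p x / q x) l (cobounded ℂ) := by
    simpa [Function.comp_def] using tendsto_inv₀_nhdsNE_zero.comp hinv
  rw [cobounded_eq_cocompact, ← coclosedCompact_eq_cocompact] at hf
  exact tendsto_coe_infty.comp hf

theorem ContinuousOn.invFunOn_image {X Y : Type*} [TopologicalSpace X] [TopologicalSpace Y]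
    [T2Space Y] [Nonempty X] {f : X → Y} {s : Set X} (hs : IsCompact s)
    (hf : ContinuousOn f s) (hinj : InjOn f s) :
    ContinuousOn (Function.invFunOn f s) (f '' s) := by
  refine continuousOn_iff_isClosed.2 fun C hC => ⟨f '' (s ∩ C),
    ((hs.inter_right hC).image_of_continuousOn (hf.mono inter_subset_left)).isClosed, ?_⟩
  ext y
  constructor
  · rintro ⟨hy, x, hx, rfl⟩
    rw [mem_preimage, hinj.leftInvOn_invFunOn hx] at hy
    exact ⟨⟨x, ⟨hx, hy⟩, rfl⟩, x, hx, rfl⟩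
  · rintro ⟨⟨x, ⟨hx, hxC⟩, rfl⟩, -⟩
    exact ⟨by rwa [mem_preimage, hinj.leftInvOn_invFunOn hx], x, hx, rfl⟩

lemma MeromorphicAt.eval_polynomial {𝕜 : Type*} [NontriviallyNormedField 𝕜] {m : 𝕜 → 𝕜}
    {x : 𝕜} (hm : MeromorphicAt m x) (p : 𝕜[X]) : MeromorphicAt (fun z => p.eval (m z)) x := by
  induction p using Polynomial.induction_on' with
  | add p q hp hq => simpa only [eval_add] using hp.fun_add hq
  | monomial n a =>
    simpa only [eval_monomial] using (MeromorphicAt.const a x).fun_mul (hm.fun_pow n)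

lemma not_eventually_eq_of_injOn {X Y : Type*} [TopologicalSpace X] {f : X → Y} {s : Set X}
    {x : X} [(𝓝[≠] x).NeBot] (hs : s ∈ 𝓝 x) (hinj : InjOn f s) :
    ¬∀ᶠ y in 𝓝 x, f y = f x := fun h => by
  obtain ⟨y, ⟨hfy, hy⟩, hyx⟩ :=
    (((h.and hs).filter_mono nhdsWithin_le_nhds).and (self_mem_nhdsWithin (s := {x}ᶜ))).exists
  exact hyx (hinj hy (mem_of_mem_nhds hs) hfy)

section LocalInverse

variable {f g : ℂ → ℂ} {s : Set ℂ} {x : ℂ}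

lemma AnalyticAt.image_mem_nhds_of_injOn (hf : AnalyticAt ℂ f x) (hs : s ∈ 𝓝 x)
    (hinj : InjOn f s) : f '' s ∈ 𝓝 (f x) :=
  hf.eventually_constant_or_nhds_le_map_nhds.resolve_left (not_eventually_eq_of_injOn hs hinj)
    (image_mem_map hs)

lemma AnalyticOnNhd.isOpen_image_of_injOn (hf : AnalyticOnNhd ℂ f s) (hs : IsOpen s)
    (hinj : InjOn f s) : IsOpen (f '' s) :=
  isOpen_iff_mem_nhds.2 <| by
    rintro _ ⟨u, hu, rfl⟩
    exact (hf u hu).image_mem_nhds_of_injOn (hs.mem_nhds hu) hinj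

lemma AnalyticAt.eventually_deriv_ne_zero_of_injOn (hf : AnalyticAt ℂ f x) (hs : s ∈ 𝓝 x)
    (hinj : InjOn f s) : ∀ᶠ y in 𝓝[≠] x, deriv f y ≠ 0 := by
  refine hf.deriv.eventually_eq_zero_or_eventually_ne_zero.resolve_left fun h => ?_
  obtain ⟨r, hr, hball⟩ := Metric.mem_nhds_iff.1 (h.and hf.eventually_analyticAt)
  have hconst : ∀ y ∈ ball x r, f y = f x := fun y hy =>
    isOpen_ball.is_const_of_deriv_eq_zero (convex_ball x r).isPreconnected
      (fun z hz => (hball hz).2.differentiableAt.differentiableWithinAt)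
      (fun z hz => (hball hz).1) hy (mem_ball_self hr)
  exact not_eventually_eq_of_injOn hs hinj (eventually_of_mem (ball_mem_nhds x hr) hconst)

/-- Critical points of `f` are isolated, so `g` is differentiable on a punctured neighbourhood of
`x`, and the singularity at `x` is removable. -/
theorem AnalyticAt.of_local_left_inverse (hg : ∀ᶠ y in 𝓝 x, ContinuousAt g y)
    (hf : AnalyticAt ℂ f (g x)) (hs : s ∈ 𝓝 (g x)) (hinj : InjOn f s)
    (hfg : ∀ᶠ y in 𝓝 x, f (g y) = y) : AnalyticAt ℂ g x := by
  refine Complex.analyticAt_of_differentiable_on_punctured_nhds_of_continuousAt ?_ hg.self_of_nhds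
  have hgne : Tendsto g (𝓝[≠] x) (𝓝[≠] (g x)) := by
    refine tendsto_nhdsWithin_iff.2 ⟨hg.self_of_nhds.tendsto.mono_left nhdsWithin_le_nhds, ?_⟩
    filter_upwards [self_mem_nhdsWithin, nhdsWithin_le_nhds hfg] with y hyx hfy hgy
    exact hyx (by rw [← hfy, mem_singleton_iff.1 hgy, hfg.self_of_nhds]; rfl)
  filter_upwards [hgne.eventually (hf.eventually_deriv_ne_zero_of_injOn hs hinj),
    hgne.eventually (hf.eventually_analyticAt.filter_mono nhdsWithin_le_nhds),
    nhdsWithin_le_nhds (hg.and hfg.eventually_nhds)] with y hderiv hfy ⟨hgy, hfgy⟩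
  exact (hfy.differentiableAt.hasDerivAt.of_local_left_inverse hgy hderiv hfgy).differentiableAt

theorem AnalyticOnNhd.analyticOnNhd_of_leftInvOn (hf : AnalyticOnNhd ℂ f s) (hs : IsOpen s)
    (hinj : InjOn f s) (hg : ContinuousOn g (f '' s)) (hgf : LeftInvOn g f s) :
    AnalyticOnNhd ℂ g (f '' s) := by
  have hopen := hf.isOpen_image_of_injOn hs hinj
  rintro _ ⟨u, hu, rfl⟩
  have hgfu : g (f u) = u := hgf hu
  refine AnalyticAt.of_local_left_inverse (s := s) ?_ (by rw [hgfu]; exact hf u hu)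
    (by rw [hgfu]; exact hs.mem_nhds hu) hinj ?_
  · filter_upwards [hopen.mem_nhds ⟨u, hu, rfl⟩] with y hy using hg.continuousAt (hopen.mem_nhds hy)
  · filter_upwards [hopen.mem_nhds ⟨u, hu, rfl⟩] with y ⟨v, hv, hvy⟩
    rw [← hvy, hgf hv]

end LocalInverse

lemma OnePoint.coe_elim_of_ne_infty {X : Type*} {y : OnePoint X} (d : X) (hy : y ≠ ∞) :
    ((y.elim d id : X) : OnePoint X) = y := by
  obtain ⟨w, rfl⟩ := ne_infty_iff_exists.1 hy
  rfl

section RatSphereEval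

variable {P Q : ℂ[X]}

lemma ratSphereEval_infty :
    ratSphereEval P Q ∞ = if Q.degree < P.degree then ∞
      else if P.degree < Q.degree then ((0 : ℂ) : OnePoint ℂ)
      else ↑(P.leadingCoeff / Q.leadingCoeff) :=
  rfl

lemma ratSphereEval_coe_of_eval_eq_zero {z : ℂ} (hz : Q.eval z = 0) :
    ratSphereEval P Q z = ∞ :=
  if_pos hz

lemma ratSphereEval_coe_of_eval_ne_zero {z : ℂ} (hz : Q.eval z ≠ 0) :
    ratSphereEval P Q z = ↑(P.eval z / Q.eval z) :=
  if_neg hz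

lemma ratSphereEval_coe_eq_coe_iff {z w : ℂ} :
    ratSphereEval P Q z = w ↔ Q.eval z ≠ 0 ∧ P.eval z / Q.eval z = w := by
  by_cases hz : Q.eval z = 0
  · simp [ratSphereEval_coe_of_eval_eq_zero hz, hz]
  · simp [ratSphereEval_coe_of_eval_ne_zero hz, hz]

lemma ratSphereEval_eventuallyEq {l : Filter ℂ} (hl : ∀ᶠ z in l, Q.eval z ≠ 0) :
    (fun z : ℂ => ratSphereEval P Q z) =ᶠ[l] fun z => ↑(P.eval z / Q.eval z) :=
  hl.mono fun _ => ratSphereEval_coe_of_eval_ne_zero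

lemma tendsto_ratSphereEval_cocompact (hQ : Q ≠ 0) :
    Tendsto (fun z : ℂ => ratSphereEval P Q z) (cocompact ℂ) (𝓝 (ratSphereEval P Q ∞)) := by
  rw [← cobounded_eq_cocompact]
  have hQ' : ∀ᶠ z in cobounded ℂ, Q.eval z ≠ 0 :=
    (eventually_cofinite_not_isRoot hQ).filter_mono (le_cofinite ℂ)
  refine Tendsto.congr' (ratSphereEval_eventuallyEq hQ').symm ?_
  rw [ratSphereEval_infty]
  split_ifs with hQP hPQ
  · exact tendsto_coe_div_infty (isLittleO_cobounded_of_degree_lt hQP).tendsto_div_nhds_zero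
      ((eventually_cofinite_not_isRoot (ne_zero_of_degree_gt hQP)).filter_mono (le_cofinite ℂ)) hQ'
  · exact (continuous_coe.tendsto 0).comp
      (isLittleO_cobounded_of_degree_lt hPQ).tendsto_div_nhds_zero
  · have hdeg : P.natDegree = Q.natDegree :=
      natDegree_eq_natDegree (le_antisymm (not_lt.1 hQP) (not_lt.1 hPQ))
    refine (continuous_coe.tendsto _).comp ((isEquivalent_cobounded_leading_monomial.div
      isEquivalent_cobounded_leading_monomial).symm.tendsto_nhds ?_)
    refine tendsto_const_nhds.congr' ?_
    filter_upwards [(eventually_cofinite_ne 0).filter_mono (le_cofinite ℂ)] with z hz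
    rw [Pi.div_apply, hdeg, mul_div_mul_right _ _ (pow_ne_zero _ hz)]

lemma tendsto_ratSphereEval_of_eval_eq_zero (hQ : Q ≠ 0) (hcop : IsCoprime P Q) {u : ℂ}
    (hu : Q.eval u = 0) : Tendsto (fun z : ℂ => ratSphereEval P Q z) (𝓝[≠] u) (𝓝 ∞) := by
  have hPu : P.eval u ≠ 0 := fun hPu => by
    obtain ⟨a, b, hab⟩ := hcop
    simpa [hPu, hu] using congrArg (eval u) hab
  have hQ' : ∀ᶠ z in 𝓝[≠] u, Q.eval z ≠ 0 :=
    (eventually_cofinite_not_isRoot hQ).filter_mono (nhdsNE_le_cofinite u)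
  refine Tendsto.congr' (ratSphereEval_eventuallyEq hQ').symm (tendsto_coe_div_infty ?_ ?_ hQ')
  · have := (Q.continuous.tendsto u).div (P.continuous.tendsto u) hPu
    rw [hu, zero_div] at this
    exact this.mono_left nhdsWithin_le_nhds
  · exact (P.continuous.continuousAt.eventually_ne hPu).filter_mono nhdsWithin_le_nhds

theorem continuous_ratSphereEval (hQ : Q ≠ 0) (hcop : IsCoprime P Q) :
    Continuous (ratSphereEval P Q) := by
  refine continuous_iff_continuousAt.2 fun z => ?_
  induction z using OnePoint.rec with
  | infty => exact continuousAt_infty'.2 (coclosedCompact_eq_cocompact (X := ℂ) ▸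
      tendsto_ratSphereEval_cocompact hQ)
  | coe u =>
    rw [continuousAt_coe]
    by_cases hu : Q.eval u = 0
    · rw [continuousAt_iff_punctured_nhds, Function.comp_apply,
        ratSphereEval_coe_of_eval_eq_zero hu]
      exact tendsto_ratSphereEval_of_eval_eq_zero hQ hcop hu
    · refine ContinuousAt.congr ?_ (ratSphereEval_eventuallyEq
        (Q.continuous.continuousAt.eventually_ne hu)).symm
      exact continuous_coe.continuousAt.comp (P.continuous.continuousAt.div
        Q.continuous.continuousAt hu)

end RatSphereEval

lemma sphereUnitReflection_infty : sphereUnitReflection ∞ = (0 : ℂ) :=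
  rfl

lemma sphereUnitReflection_zero : sphereUnitReflection (0 : ℂ) = ∞ :=
  if_pos rfl

lemma sphereUnitReflection_coe_of_ne_zero {z : ℂ} (hz : z ≠ 0) :
    sphereUnitReflection z = ↑((starRingEnd ℂ) z)⁻¹ :=
  if_neg hz

lemma sphereUnitReflection_eq_comp :
    sphereUnitReflection = ratSphereEval 1 X ∘ Complex.conjLIE.toHomeomorph.onePointCongr := by
  funext z
  induction z using OnePoint.rec with
  | infty => simp [sphereUnitReflection_infty, ratSphereEval_infty]
  | coe w =>
    by_cases hw : w = 0
    · simp [hw, sphereUnitReflection_zero, ratSphereEval_coe_of_eval_eq_zero]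
    · simp [hw, sphereUnitReflection_coe_of_ne_zero, ratSphereEval_coe_of_eval_ne_zero]

theorem continuous_sphereUnitReflection : Continuous sphereUnitReflection := by
  rw [sphereUnitReflection_eq_comp]
  exact (continuous_ratSphereEval X_ne_zero isCoprime_one_left).comp (Homeomorph.continuous _)

lemma sphereUnitReflection_coe_of_norm_eq_one {z : ℂ} (hz : ‖z‖ = 1) :
    sphereUnitReflection z = z := by
  have hz0 : z ≠ 0 := norm_ne_zero_iff.1 (by rw [hz]; exact one_ne_zero)
  rw [sphereUnitReflection_coe_of_ne_zero hz0, coe_eq_coe]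
  simp [Complex.inv_def, Complex.normSq_eq_norm_sq, hz]

section UnivalentRational

local notation "𝔻̄" => ((fun z : ℂ => (z : OnePoint ℂ)) '' closedBall (0 : ℂ) 1)

variable {P Q : ℂ[X]}

def imageUnitBall (P Q : ℂ[X]) : Set ℂ :=
  {z : ℂ | (z : OnePoint ℂ) ∈ ratSphereEval P Q '' ((fun z : ℂ => (z : OnePoint ℂ)) '' ball 0 1)}

lemma imageUnitBall_eq :
    imageUnitBall P Q = (fun u => P.eval u / Q.eval u) '' (ball 0 1 ∩ {u | Q.eval u ≠ 0}) := by
  ext z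
  simp [imageUnitBall, ratSphereEval_coe_eq_coe_iff, and_assoc]

/-- At poles of `P / Q` both sides vanish: the left by the junk value of `elim` at `∞`, the right
because `x / 0 = 0`. -/
lemma starRingEnd_elim_ratSphereEval_sphereUnitReflection {u : ℂ} (hu : u ≠ 0) :
    starRingEnd ℂ ((ratSphereEval P Q (sphereUnitReflection u)).elim 0 id)
      = (P.map (starRingEnd ℂ)).eval u⁻¹ / (Q.map (starRingEnd ℂ)).eval u⁻¹ := by
  have hu' : u⁻¹ = starRingEnd ℂ ((starRingEnd ℂ) u)⁻¹ := by simp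
  rw [sphereUnitReflection_coe_of_ne_zero hu, hu', eval_map_apply, eval_map_apply]
  by_cases hv : Q.eval ((starRingEnd ℂ) u)⁻¹ = 0
  · simp [ratSphereEval_coe_of_eval_eq_zero hv, hv]
  · simp [ratSphereEval_coe_of_eval_ne_zero hv]

lemma analyticOnNhd_div_eval :
    AnalyticOnNhd ℂ (fun u => P.eval u / Q.eval u) {u | Q.eval u ≠ 0} := fun u hu =>
  (P.differentiable.analyticAt u).div (Q.differentiable.analyticAt u) hu

lemma isOpen_ball_inter_eval_ne_zero : IsOpen (ball (0 : ℂ) 1 ∩ {u | Q.eval u ≠ 0}) :=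
  isOpen_ball.inter (isOpen_ne_fun Q.continuous continuous_const)

lemma injOn_div_of_injOn_ratSphereEval (hinj : InjOn (ratSphereEval P Q) 𝔻̄) :
    InjOn (fun u => P.eval u / Q.eval u) (ball 0 1 ∩ {u | Q.eval u ≠ 0}) := by
  intro a ha b hb hab
  refine coe_injective (hinj ⟨a, ball_subset_closedBall ha.1, rfl⟩
    ⟨b, ball_subset_closedBall hb.1, rfl⟩ ?_)
  simp only [ratSphereEval_coe_of_eval_ne_zero ha.2, ratSphereEval_coe_of_eval_ne_zero hb.2]
  exact congrArg _ hab

lemma isOpen_imageUnitBall (hinj : InjOn (ratSphereEval P Q) 𝔻̄) : IsOpen (imageUnitBall P Q) := by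
  rw [imageUnitBall_eq]
  exact (analyticOnNhd_div_eval.mono inter_subset_right).isOpen_image_of_injOn
    isOpen_ball_inter_eval_ne_zero (injOn_div_of_injOn_ratSphereEval hinj)

lemma invFunOn_ratSphereEval_coe_div (hinj : InjOn (ratSphereEval P Q) 𝔻̄) {u : ℂ}
    (hu : u ∈ ball 0 1 ∩ {u | Q.eval u ≠ 0}) :
    Function.invFunOn (ratSphereEval P Q) 𝔻̄ ↑(P.eval u / Q.eval u) = u := by
  rw [← ratSphereEval_coe_of_eval_ne_zero hu.2]
  exact hinj.leftInvOn_invFunOn ⟨u, ball_subset_closedBall hu.1, rfl⟩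

lemma exists_invFunOn_ratSphereEval_eq (hinj : InjOn (ratSphereEval P Q) 𝔻̄) {z : ℂ}
    (hz : z ∈ imageUnitBall P Q) :
    ∃ u ∈ ball 0 1 ∩ {u | Q.eval u ≠ 0}, P.eval u / Q.eval u = z ∧
      Function.invFunOn (ratSphereEval P Q) 𝔻̄ z = u := by
  rw [imageUnitBall_eq] at hz
  obtain ⟨u, hu, rfl⟩ := hz
  exact ⟨u, hu, rfl, invFunOn_ratSphereEval_coe_div hinj hu⟩

lemma analyticOnNhd_elim_invFunOn_ratSphereEval (hQ : Q ≠ 0) (hcop : IsCoprime P Q)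
    (hinj : InjOn (ratSphereEval P Q) 𝔻̄) :
    AnalyticOnNhd ℂ (fun z : ℂ => (Function.invFunOn (ratSphereEval P Q) 𝔻̄ z).elim 0 id)
      (imageUnitBall P Q) := by
  have hinvF := ContinuousOn.invFunOn_image ((isCompact_closedBall 0 1).image continuous_coe)
    (continuous_ratSphereEval hQ hcop).continuousOn hinj
  rw [imageUnitBall_eq]
  refine (analyticOnNhd_div_eval.mono inter_subset_right).analyticOnNhd_of_leftInvOn
    isOpen_ball_inter_eval_ne_zero (injOn_div_of_injOn_ratSphereEval hinj) ?_ ?_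
  · have hmaps : MapsTo (fun z : ℂ => (z : OnePoint ℂ))
        ((fun u => P.eval u / Q.eval u) '' (ball 0 1 ∩ {u | Q.eval u ≠ 0}))
        (ratSphereEval P Q '' 𝔻̄) := by
      rintro _ ⟨v, hv, rfl⟩
      exact ⟨v, ⟨v, ball_subset_closedBall hv.1, rfl⟩, ratSphereEval_coe_of_eval_ne_zero hv.2⟩
    rintro _ ⟨u, hu, rfl⟩
    refine ContinuousAt.comp_continuousWithinAt (g := fun y : OnePoint ℂ => y.elim (0 : ℂ) id)
      ?_ ((hinvF _ (hmaps ⟨u, hu, rfl⟩)).comp continuous_coe.continuousWithinAt hmaps)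
    rw [invFunOn_ratSphereEval_coe_div hinj hu]
    exact continuousAt_coe.2 continuousAt_id
  · intro u hu
    simp only [invFunOn_ratSphereEval_coe_div hinj hu]
    rfl

lemma meromorphicOn_starRingEnd_elim_reflection (hQ : Q ≠ 0) (hcop : IsCoprime P Q)
    (hinj : InjOn (ratSphereEval P Q) 𝔻̄) :
    MeromorphicOn (fun z : ℂ => starRingEnd ℂ ((ratSphereEval P Q (sphereUnitReflection
        (Function.invFunOn (ratSphereEval P Q) 𝔻̄ z))).elim 0 id)) (imageUnitBall P Q) := by
  intro z₀ hz₀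
  have hh := (analyticOnNhd_elim_invFunOn_ratSphereEval hQ hcop hinj z₀ hz₀).meromorphicAt.inv
  refine ((hh.eval_polynomial (P.map (starRingEnd ℂ))).div
    (hh.eval_polynomial (Q.map (starRingEnd ℂ)))).congr ?_
  filter_upwards [nhdsWithin_le_nhds ((isOpen_imageUnitBall hinj).mem_nhds hz₀),
    (eventually_cofinite_ne (P.eval 0 / Q.eval 0)).filter_mono (nhdsNE_le_cofinite z₀)]
    with z hz hz'
  obtain ⟨u, -, rfl, hinv⟩ := exists_invFunOn_ratSphereEval_eq hinj hz
  have hu : u ≠ 0 := by rintro rfl; exact hz' rfl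
  simp only [Pi.div_apply, Pi.inv_apply, hinv]
  rw [starRingEnd_elim_ratSphereEval_sphereUnitReflection hu]
  rfl

end UnivalentRational

theorem image_of_univalent_rational_is_quadrature_domain_general
    (P Q : Polynomial ℂ) (hQ : Q ≠ 0) (hcop : IsCoprime P Q)
    (hinj : Set.InjOn (ratSphereEval P Q)
      ((fun z : ℂ => (z : OnePoint ℂ)) '' Metric.closedBall 0 1)) :
    ∃ σ : OnePoint ℂ → OnePoint ℂ,
      (∀ w : ℂ, ‖w‖ ≤ 1 →
        σ (ratSphereEval P Q (w : OnePoint ℂ))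
          = ratSphereEval P Q (sphereUnitReflection (w : OnePoint ℂ))) ∧
      ContinuousOn σ
        (ratSphereEval P Q '' ((fun z : ℂ => (z : OnePoint ℂ)) '' Metric.closedBall 0 1)) ∧
      (∀ z ∈ Metric.sphere (0 : ℂ) 1,
        σ (ratSphereEval P Q (z : OnePoint ℂ)) = ratSphereEval P Q (z : OnePoint ℂ)) ∧
      ∃ g : ℂ → ℂ,
        MeromorphicOn (fun z => (starRingEnd ℂ) (g z))
          {z : ℂ | (z : OnePoint ℂ)
            ∈ ratSphereEval P Q '' ((fun z : ℂ => (z : OnePoint ℂ)) '' Metric.ball 0 1)} ∧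
        ∀ z : ℂ,
          (z : OnePoint ℂ)
              ∈ ratSphereEval P Q '' ((fun z : ℂ => (z : OnePoint ℂ)) '' Metric.ball 0 1) →
            σ (z : OnePoint ℂ) ≠ (∞ : OnePoint ℂ) → σ (z : OnePoint ℂ) = (g z : OnePoint ℂ) := by
  set F := ratSphereEval P Q
  have hF : Continuous F := continuous_ratSphereEval hQ hcop
  set σ := F ∘ sphereUnitReflection ∘ Function.invFunOn F ((↑) '' closedBall (0 : ℂ) 1)
  have hσ : ∀ w : ℂ, ‖w‖ ≤ 1 → σ (F w) = F (sphereUnitReflection w) := fun w hw => by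
    simp only [σ, Function.comp_apply,
      hinj.leftInvOn_invFunOn ⟨w, mem_closedBall_zero_iff.2 hw, rfl⟩]
  refine ⟨σ, hσ, ?_, fun z hz => ?_, fun z => (σ z).elim 0 id,
    meromorphicOn_starRingEnd_elim_reflection hQ hcop hinj,
    fun z _ hz => (coe_elim_of_ne_infty 0 hz).symm⟩
  · exact (hF.comp continuous_sphereUnitReflection).comp_continuousOn
      (ContinuousOn.invFunOn_image ((isCompact_closedBall 0 1).image continuous_coe)
        hF.continuousOn hinj)
  · have hz1 : ‖z‖ = 1 := mem_sphere_zero_iff_norm.1 hz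
    rw [hσ z hz1.le, sphereUnitReflection_coe_of_norm_eq_one hz1]

/-- Let `f = P/Q` be a rational map that is injective on the closed unit disk and has no
poles on the unit circle, and let `Ω = f(𝔻)`.  Then the map `σ = f ∘ η ∘ (f|_{𝔻̄})⁻¹`
(characterized by `σ(f(w)) = f(η(w))` for `|w| ≤ 1`) is continuous on `f(𝔻̄)`, fixes every
point of `f(S¹) = ∂Ω`, and is anti-meromorphic on `Ω`; i.e., `Ω` is a quadrature domain
with Schwarz reflection map `σ`. -/
theorem image_of_univalent_rational_is_quadrature_domain
    (P Q : Polynomial ℂ) (hQ : Q ≠ 0) (hcop : IsCoprime P Q)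
    (hinj : Set.InjOn (ratSphereEval P Q)
      ((fun z : ℂ => (z : OnePoint ℂ)) '' Metric.closedBall 0 1))
    (hpole : ∀ z ∈ Metric.sphere (0 : ℂ) 1, Q.eval z ≠ 0) :
    ∃ σ : OnePoint ℂ → OnePoint ℂ,
      (∀ w : ℂ, ‖w‖ ≤ 1 →
        σ (ratSphereEval P Q (w : OnePoint ℂ))
          = ratSphereEval P Q (sphereUnitReflection (w : OnePoint ℂ))) ∧
      ContinuousOn σ
        (ratSphereEval P Q '' ((fun z : ℂ => (z : OnePoint ℂ)) '' Metric.closedBall 0 1)) ∧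
      (∀ z ∈ Metric.sphere (0 : ℂ) 1,
        σ (ratSphereEval P Q (z : OnePoint ℂ)) = ratSphereEval P Q (z : OnePoint ℂ)) ∧
      ∃ g : ℂ → ℂ,
        MeromorphicOn (fun z => (starRingEnd ℂ) (g z))
          {z : ℂ | (z : OnePoint ℂ)
            ∈ ratSphereEval P Q '' ((fun z : ℂ => (z : OnePoint ℂ)) '' Metric.ball 0 1)} ∧
        ∀ z : ℂ,
          (z : OnePoint ℂ)
              ∈ ratSphereEval P Q '' ((fun z : ℂ => (z : OnePoint ℂ)) '' Metric.ball 0 1) →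
            σ (z : OnePoint ℂ) ≠ (∞ : OnePoint ℂ) → σ (z : OnePoint ℂ) = (g z : OnePoint ℂ) :=
  image_of_univalent_rational_is_quadrature_domain_general P Q hQ hcop hinj
end
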